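/- Let n, d, l ≥ 1, let U ⊆ ℝ^l be a nonempty set, let k > 0 and c ∈ ℝ. Let b : ℝ^n × U → ℝ^n and σ : ℝ^n × U → ℝ^{n×d} be continuously differentiable in the state variable x for every fixed u ∈ U. If the differential joint dissipativity condition ⟨D_x b(x,u) y, y⟩ + k ‖D_x σ(x,u) y‖₂² ≤ c |y|² holds for all x, y ∈ ℝ^n and u ∈ U, then the integrated joint dissipativity condition ⟨b(x,u) − b(y,u), x − y⟩ + k ‖σ(x,u) − σ(y,u)‖₂² ≤ c |x − y|² holds for all x, y ∈ ℝ^n and u ∈ U. -/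

import Mathlib

/-!
Along the segment `t ↦ y + t • (x - y)` the fundamental theorem of calculus gives
`⟪b x - b y, x - y⟫ = ∫₀¹ ⟪D b (x - y), x - y⟫` and
`‖σ x - σ y‖² = ∫₀¹ ⟪D σ (x - y), σ x - σ y⟫ ≤ ∫₀¹ ‖D σ (x - y)‖²`, the last step by
`2⟪a, s⟫ ≤ ‖a‖² + ‖s‖²`. Integrating the differential condition along the segment then
yields the integrated one.
-/

open scoped RealInnerProductSpace
open intervalIntegral

section
variable {E F : Type*} [NormedAddCommGroup E] [NormedSpace ℝ E]
  [NormedAddCommGroup F] [InnerProductSpace ℝ F] {f : E → F}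

theorem ContDiff.continuous_fderiv_segment_apply (hf : ContDiff ℝ 1 f) (x y : E) :
    Continuous fun t : ℝ => fderiv ℝ f (y + t • (x - y)) (x - y) :=
  (hf.continuous_fderiv_apply one_ne_zero).comp
    (by fun_prop : Continuous fun t : ℝ => (y + t • (x - y), x - y))

theorem ContDiff.inner_sub_eq_integral_fderiv (hf : ContDiff ℝ 1 f) (x y : E) (w : F) :
    ⟪f x - f y, w⟫ = ∫ t in (0 : ℝ)..1, ⟪fderiv ℝ f (y + t • (x - y)) (x - y), w⟫ := by
  have hderiv (t : ℝ) : HasDerivAt (fun s : ℝ => ⟪f (y + s • (x - y)), w⟫)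
      ⟪fderiv ℝ f (y + t • (x - y)) (x - y), w⟫ t := by
    have hline : HasDerivAt (fun s : ℝ => y + s • (x - y)) (x - y) t := by
      simpa using ((hasDerivAt_id t).smul_const (x - y)).const_add y
    exact (((hf.differentiable one_ne_zero _).hasFDerivAt.comp_hasDerivAt t hline).inner ℝ
      (hasDerivAt_const t w)).congr_deriv (by simp)
  rw [integral_eq_sub_of_hasDerivAt (fun t _ => hderiv t)
    (((hf.continuous_fderiv_segment_apply x y).inner continuous_const).intervalIntegrable 0 1),
    inner_sub_left]
  simp

theorem ContDiff.sq_norm_sub_le_integral_fderiv (hf : ContDiff ℝ 1 f) (x y : E) :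
    ‖f x - f y‖ ^ 2 ≤ ∫ t in (0 : ℝ)..1, ‖fderiv ℝ f (y + t • (x - y)) (x - y)‖ ^ 2 := by
  set S := f x - f y
  set F' := fun t : ℝ => fderiv ℝ f (y + t • (x - y)) (x - y)
  have hF' : Continuous F' := hf.continuous_fderiv_segment_apply x y
  have hF'sq : Continuous fun t => ‖F' t‖ ^ 2 := hF'.norm.pow 2
  have hS : ‖S‖ ^ 2 = ∫ t in (0 : ℝ)..1, ⟪F' t, S⟫ := by
    rw [← real_inner_self_eq_norm_sq]
    exact hf.inner_sub_eq_integral_fderiv x y S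
  have hamgm : ∫ t in (0 : ℝ)..1, ⟪F' t, S⟫ ≤ ∫ t in (0 : ℝ)..1, (‖F' t‖ ^ 2 + ‖S‖ ^ 2) / 2 :=
    integral_mono_on zero_le_one ((hF'.inner continuous_const).intervalIntegrable 0 1)
      ((hF'sq.add continuous_const).div_const 2 |>.intervalIntegrable 0 1) fun t _ => by
        nlinarith [real_inner_le_norm (F' t) S, sq_nonneg (‖F' t‖ - ‖S‖)]
  have hsplit : ∫ t in (0 : ℝ)..1, (‖F' t‖ ^ 2 + ‖S‖ ^ 2) / 2
      = ((∫ t in (0 : ℝ)..1, ‖F' t‖ ^ 2) + ‖S‖ ^ 2) / 2 := by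
    rw [integral_div, integral_add (hF'sq.intervalIntegrable 0 1) intervalIntegrable_const]
    simp
  linarith
end

theorem inner_sub_add_mul_sq_norm_sub_le_of_fderiv
    {E G : Type*} [NormedAddCommGroup E] [InnerProductSpace ℝ E]
    [NormedAddCommGroup G] [InnerProductSpace ℝ G] {f : E → E} {g : E → G}
    (hf : ContDiff ℝ 1 f) (hg : ContDiff ℝ 1 g) {k c : ℝ} (hk : 0 ≤ k)
    (hdiss : ∀ x y, ⟪fderiv ℝ f x y, y⟫ + k * ‖fderiv ℝ g x y‖ ^ 2 ≤ c * ‖y‖ ^ 2) (x y : E) :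
    ⟪f x - f y, x - y⟫ + k * ‖g x - g y‖ ^ 2 ≤ c * ‖x - y‖ ^ 2 := by
  set γ := fun t : ℝ => y + t • (x - y)
  have hfγ : Continuous fun t => ⟪fderiv ℝ f (γ t) (x - y), x - y⟫ :=
    (hf.continuous_fderiv_segment_apply x y).inner continuous_const
  have hgγ : Continuous fun t => ‖fderiv ℝ g (γ t) (x - y)‖ ^ 2 :=
    (hg.continuous_fderiv_segment_apply x y).norm.pow 2
  calc ⟪f x - f y, x - y⟫ + k * ‖g x - g y‖ ^ 2
      ≤ (∫ t in (0 : ℝ)..1, ⟪fderiv ℝ f (γ t) (x - y), x - y⟫)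
          + k * ∫ t in (0 : ℝ)..1, ‖fderiv ℝ g (γ t) (x - y)‖ ^ 2 := by
        rw [hf.inner_sub_eq_integral_fderiv]
        gcongr
        exact hg.sq_norm_sub_le_integral_fderiv x y
    _ = ∫ t in (0 : ℝ)..1, (⟪fderiv ℝ f (γ t) (x - y), x - y⟫
          + k * ‖fderiv ℝ g (γ t) (x - y)‖ ^ 2) := by
        rw [integral_add (hfγ.intervalIntegrable 0 1) ((hgγ.const_mul k).intervalIntegrable 0 1),
          integral_const_mul]
    _ ≤ ∫ _ in (0 : ℝ)..1, c * ‖x - y‖ ^ 2 :=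
        integral_mono_on zero_le_one ((hfγ.add (hgγ.const_mul k)).intervalIntegrable 0 1)
          intervalIntegrable_const fun t _ => hdiss (γ t) (x - y)
    _ = c * ‖x - y‖ ^ 2 := by simp

/-- Here `ℝ^n` is `EuclideanSpace ℝ (Fin n)` and `n × d` matrices with the Hilbert–Schmidt
(Frobenius) norm are modelled by `EuclideanSpace ℝ (Fin n × Fin d)`. -/
theorem stmt_0_general (n d l : ℕ)
    (U : Set (EuclideanSpace ℝ (Fin l)))
    (k c : ℝ) (hk : 0 < k)
    (b : EuclideanSpace ℝ (Fin n) → EuclideanSpace ℝ (Fin l) → EuclideanSpace ℝ (Fin n))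
    (σ : EuclideanSpace ℝ (Fin n) → EuclideanSpace ℝ (Fin l) →
      EuclideanSpace ℝ (Fin n × Fin d))
    (hb : ∀ u ∈ U, ContDiff ℝ 1 (fun x => b x u))
    (hσ : ∀ u ∈ U, ContDiff ℝ 1 (fun x => σ x u))
    (hdiss : ∀ u ∈ U, ∀ x y : EuclideanSpace ℝ (Fin n),
      ⟪fderiv ℝ (fun z => b z u) x y, y⟫
        + k * ‖fderiv ℝ (fun z => σ z u) x y‖ ^ 2 ≤ c * ‖y‖ ^ 2) :
    ∀ u ∈ U, ∀ x y : EuclideanSpace ℝ (Fin n),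
      ⟪b x u - b y u, x - y⟫ + k * ‖σ x u - σ y u‖ ^ 2 ≤ c * ‖x - y‖ ^ 2 :=
  fun u hu => inner_sub_add_mul_sq_norm_sub_le_of_fderiv (hb u hu) (hσ u hu) hk.le (hdiss u hu)

/-- the differential joint dissipativity condition implies the
integrated joint dissipativity condition.  Here `ℝ^n` is `EuclideanSpace ℝ (Fin n)`
and `n × d` matrices with the Hilbert–Schmidt (Frobenius) norm are modelled by
`EuclideanSpace ℝ (Fin n × Fin d)` (the Euclidean norm of the entries). -/
theorem stmt_0 (n d l : ℕ) (hn : 1 ≤ n) (hd : 1 ≤ d) (hl : 1 ≤ l)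
    (U : Set (EuclideanSpace ℝ (Fin l))) (hU : U.Nonempty)
    (k c : ℝ) (hk : 0 < k)
    (b : EuclideanSpace ℝ (Fin n) → EuclideanSpace ℝ (Fin l) → EuclideanSpace ℝ (Fin n))
    (σ : EuclideanSpace ℝ (Fin n) → EuclideanSpace ℝ (Fin l) →
      EuclideanSpace ℝ (Fin n × Fin d))
    (hb : ∀ u ∈ U, ContDiff ℝ 1 (fun x => b x u))
    (hσ : ∀ u ∈ U, ContDiff ℝ 1 (fun x => σ x u))
    (hdiss : ∀ u ∈ U, ∀ x y : EuclideanSpace ℝ (Fin n),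
      ⟪fderiv ℝ (fun z => b z u) x y, y⟫
        + k * ‖fderiv ℝ (fun z => σ z u) x y‖ ^ 2 ≤ c * ‖y‖ ^ 2) :
    ∀ u ∈ U, ∀ x y : EuclideanSpace ℝ (Fin n),
      ⟪b x u - b y u, x - y⟫ + k * ‖σ x u - σ y u‖ ^ 2 ≤ c * ‖x - y‖ ^ 2 :=
  stmt_0_general n d l U k c hk b σ hb hσ hdiss
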